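/- A subset S of a finite-dimensional real vector space V is bounded if and only if the asymptotic cone of S is contained in {0}. -/
import Mathlib


open Filter Topology

/-- The asymptotic cone of a subset `S` of a real vector space. -/
def asympCone {V : Type*} [NormedAddCommGroup V] [NormedSpace ℝ V] (S : Set V) : Set V :=
  {v | ∃ (ε : ℕ → ℝ) (s : ℕ → V), (∀ i, 0 < ε i) ∧
    Tendsto ε atTop (𝓝 0) ∧ (∀ i, s i ∈ S) ∧
    Tendsto (fun i => ε i • s i) atTop (𝓝 v)}

/-- A subset of a finite-dimensional real normed vector space is bounded if and only if
its asymptotic cone is contained in `{0}`. -/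
theorem isBounded_iff_asympCone_subset_zero {V : Type*} [NormedAddCommGroup V]
    [NormedSpace ℝ V] [FiniteDimensional ℝ V] (S : Set V) :
    Bornology.IsBounded S ↔ asympCone S ⊆ {0} := by
  constructor
  · rintro hB v ⟨ε, s, hpos, hε, hs, hlim⟩
    obtain ⟨C, hC⟩ := hB.exists_norm_le
    have h0 : Tendsto (fun i => ε i • s i) atTop (𝓝 (0 : V)) := by
      rw [tendsto_zero_iff_norm_tendsto_zero]
      have hb : ∀ i, ‖ε i • s i‖ ≤ ε i * C := by
        intro i
        rw [norm_smul, Real.norm_of_nonneg (hpos i).le]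
        exact mul_le_mul_of_nonneg_left (hC _ (hs i)) (hpos i).le
      have : Tendsto (fun i => ε i * C) atTop (𝓝 0) := by
        simpa using hε.mul_const C
      exact squeeze_zero (fun i => norm_nonneg _) hb this
    have := tendsto_nhds_unique hlim h0
    simp [this]
  · intro h
    by_contra hB
    -- S unbounded: find s n with ‖s n‖ > n
    have hex : ∀ n : ℕ, ∃ x ∈ S, (n : ℝ) < ‖x‖ := by
      intro n
      by_contra hc
      push_neg at hc
      exact hB (isBounded_iff_forall_norm_le.2 ⟨n, hc⟩)
    choose s hsS hsn using hex
    set t : ℕ → V := fun n => s (n + 1) with ht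
    have htpos : ∀ n, (0 : ℝ) < ‖t n‖ := fun n =>
      lt_of_le_of_lt (Nat.cast_nonneg (n+1)) (hsn (n + 1))
    set ε : ℕ → ℝ := fun n => ‖t n‖⁻¹ with hεdef
    have hεpos : ∀ n, 0 < ε n := fun n => inv_pos.2 (htpos n)
    have hε0 : Tendsto ε atTop (𝓝 0) := by
      have hb : ∀ n, ε n ≤ ((n : ℝ) + 1)⁻¹ := by
        intro n
        apply inv_anti₀ (by positivity)
        exact_mod_cast (hsn (n + 1)).le
      have : Tendsto (fun n : ℕ => ((n : ℝ) + 1)⁻¹) atTop (𝓝 0) :=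
        tendsto_one_div_add_atTop_nhds_zero_nat.congr (by intro n; simp [one_div])
      exact squeeze_zero (fun n => (hεpos n).le) hb this
    have hmem : ∀ n, ε n • t n ∈ Metric.sphere (0 : V) 1 := by
      intro n
      simp [norm_smul, Real.norm_of_nonneg (hεpos n).le, hεdef,
        inv_mul_cancel₀ (htpos n).ne']
    obtain ⟨v, hv, φ, hφ, hlim⟩ :=
      (isCompact_sphere (0 : V) 1).tendsto_subseq hmem
    have hvcone : v ∈ asympCone S :=
      ⟨ε ∘ φ, t ∘ φ, fun i => hεpos _, hε0.comp hφ.tendsto_atTop,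
        fun i => hsS _, hlim⟩
    have hv0 : v = 0 := h hvcone
    rw [hv0] at hv
    simp at hv
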